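/- Hierarchy part of the proof of Theorem 1: if every component of the weight vector l satisfies l_i ≥ α for some α > 0, the direction vector r satisfies ‖r‖₂ ≤ 1, and there is a vector x_w with p_score(u,w) ≤ ε₁ and p_score(v,w) ≤ ε₁ for some ε₁ ≥ 0, then |h_score(u,v)| ≤ 2√(ε₁/α). -/

import Mathlib

open RealInnerProductSpace

variable {ι : Type*} [Fintype ι]

theorem EuclideanSpace.abs_sum_mul_le_norm_mul_norm (x y : EuclideanSpace ℝ ι) :
    |∑ i, x i * y i| ≤ ‖x‖ * ‖y‖ := by
  have hinner : ⟪x, y⟫ = ∑ i, x i * y i := by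
    simp only [PiLp.inner_apply, RCLike.inner_apply, conj_trivial, mul_comm]
  exact hinner ▸ abs_real_inner_le_norm x y

theorem EuclideanSpace.dist_le_sqrt_div_of_weighted_sum_sq_le {l : ι → ℝ} {α ε : ℝ}
    (hα : 0 < α) (hl : ∀ i, α ≤ l i) {x y : EuclideanSpace ℝ ι}
    (h : ∑ i, l i * (x i - y i) ^ 2 ≤ ε) : dist x y ≤ √(ε / α) := by
  have hsum : ∑ i, (x i - y i) ^ 2 ≤ ε / α := by
    rw [le_div_iff₀' hα, Finset.mul_sum]
    exact (Finset.sum_le_sum fun i _ ↦ mul_le_mul_of_nonneg_right (hl i) (sq_nonneg _)).trans h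
  rw [EuclideanSpace.dist_eq]
  simpa only [Real.dist_eq, sq_abs] using Real.sqrt_le_sqrt hsum

theorem h_score_le_two_sqrt_general
    (d : ℕ)
    (xu xv xw : EuclideanSpace ℝ (Fin d)) (l r : EuclideanSpace ℝ (Fin d))
    (α : ℝ) (hα : 0 < α) (hl : ∀ i, α ≤ l i) (hr : ‖r‖ ≤ 1)
    (ε₁ : ℝ)
    (huw : ∑ i, l i * (xw i - xu i) ^ 2 ≤ ε₁)
    (hvw : ∑ i, l i * (xw i - xv i) ^ 2 ≤ ε₁) :
    |∑ i, (xv i - xu i) * r i| ≤ 2 * Real.sqrt (ε₁ / α) := by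
  have hu := EuclideanSpace.dist_le_sqrt_div_of_weighted_sum_sq_le hα hl huw
  have hv := EuclideanSpace.dist_le_sqrt_div_of_weighted_sum_sq_le hα hl hvw
  calc |∑ i, (xv i - xu i) * r i| ≤ ‖xv - xu‖ * ‖r‖ :=
        EuclideanSpace.abs_sum_mul_le_norm_mul_norm (xv - xu) r
    _ ≤ dist xv xu := by
        rw [← dist_eq_norm]; exact mul_le_of_le_one_right dist_nonneg hr
    _ ≤ dist xw xv + dist xw xu := dist_triangle_left xv xu xw
    _ ≤ 2 * √(ε₁ / α) := by linarith

/-- Hierarchy part of the proof of Theorem 1. -/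
theorem h_score_le_two_sqrt
    (d : ℕ) (hd : 1 ≤ d)
    (xu xv xw : EuclideanSpace ℝ (Fin d)) (l r : EuclideanSpace ℝ (Fin d))
    (α : ℝ) (hα : 0 < α) (hl : ∀ i, α ≤ l i) (hr : ‖r‖ ≤ 1)
    (ε₁ : ℝ) (hε₁ : 0 ≤ ε₁)
    (huw : ∑ i, l i * (xw i - xu i) ^ 2 ≤ ε₁)
    (hvw : ∑ i, l i * (xw i - xv i) ^ 2 ≤ ε₁) :
    |∑ i, (xv i - xu i) * r i| ≤ 2 * Real.sqrt (ε₁ / α) :=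
  h_score_le_two_sqrt_general d xu xv xw l r α hα hl hr ε₁ huw hvw
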